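/- Let I be a finite set, I = S ⊔ T a partition into two disjoint subsets, and let y assign a nonnegative real number to each nonempty subset of I. Let P = ∑_{∅ ≠ J ⊆ I} y(J)•Δ_J ⊆ ℝ^I. Then the set of points of P maximizing the functional x ↦ ∑_{s ∈ S} x(s) equals the Minkowski sum ∑_{J : J ∩ S ≠ ∅} y(J)•Δ_{J ∩ S} + ∑_{∅ ≠ J ⊆ T} y(J)•Δ_J. -/

import Mathlib

open Finset Pointwise

/-!
The maximizers of a linear functional on a Minkowski sum are the Minkowski sum of the maximizers
on the summands, they commute with nonnegative scaling, and on a convex hull they are the convex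
hull of the maximizing generators. On `Δ_J` the functional `x ↦ ∑_{s ∈ S} x s` takes the value
`[j ∈ S]` at `e_j`, so its face is `Δ_{J ∩ S}` when `J` meets `S`, and all of `Δ_J` when `J ⊆ T`.
-/

/-- The simplex `Δ_J = conv { e_j : j ∈ J }` in `ℝ^I`. -/
def simplexOf {I : Type*} [DecidableEq I] (J : Finset I) : Set (I → ℝ) :=
  convexHull ℝ ((fun j => Pi.single j (1 : ℝ)) '' (J : Set I))

def maximizers {E β : Type*} [LE β] (f : E → β) (A : Set E) : Set E :=
  {x ∈ A | ∀ w ∈ A, f w ≤ f x}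

section Order
variable {E F β γ : Type*}

lemma maximizers_singleton [Preorder β] (f : E → β) (x : E) : maximizers f {x} = {x} :=
  Set.sep_eq_self_iff_mem_true.2 fun _ hx _ hw => by rw [hx, hw]

lemma maximizers_image [LE β] (f : F → β) (g : E → F) (A : Set E) :
    maximizers f (g '' A) = g '' maximizers (f ∘ g) A := by
  ext x
  simp only [maximizers, Set.mem_sep_iff, Set.mem_image, Function.comp]
  constructor
  · rintro ⟨⟨a, ha, rfl⟩, hmax⟩
    exact ⟨a, ⟨ha, fun a' ha' => hmax _ ⟨a', ha', rfl⟩⟩, rfl⟩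
  · rintro ⟨a, ⟨ha, hmax⟩, rfl⟩
    exact ⟨⟨a, ha, rfl⟩, by rintro _ ⟨a', ha', rfl⟩; exact hmax a' ha'⟩

lemma maximizers_comp_of_strictMono [LinearOrder β] [Preorder γ] {φ : β → γ} (hφ : StrictMono φ)
    (f : E → β) (A : Set E) : maximizers (φ ∘ f) A = maximizers f A := by
  simp only [maximizers, Function.comp, hφ.le_iff_le]

lemma maximizers_of_forall_eq [Preorder β] {f : E → β} {A : Set E} {c : β}
    (h : ∀ x ∈ A, f x = c) : maximizers f A = A :=
  Set.sep_eq_self_iff_mem_true.2 fun x hx w hw => by rw [h x hx, h w hw]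

end Order

section AddMonoid
variable {E β ι F : Type*} [AddCommMonoid E] [AddCommMonoid β] [PartialOrder β]
  [IsOrderedCancelAddMonoid β] [FunLike F E β] [AddMonoidHomClass F E β]

lemma maximizers_add (f : F) (A B : Set E) :
    maximizers f (A + B) = maximizers f A + maximizers f B := by
  ext x
  constructor
  · rintro ⟨⟨a, ha, b, hb, rfl⟩, hmax⟩
    refine ⟨a, ⟨ha, fun a' ha' => ?_⟩, b, ⟨hb, fun b' hb' => ?_⟩, rfl⟩
    · have := hmax (a' + b) (Set.add_mem_add ha' hb)
      rw [map_add, map_add] at this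
      exact le_of_add_le_add_right this
    · have := hmax (a + b') (Set.add_mem_add ha hb')
      rw [map_add, map_add] at this
      exact le_of_add_le_add_left this
  · rintro ⟨a, ⟨ha, hamax⟩, b, ⟨hb, hbmax⟩, rfl⟩
    refine ⟨Set.add_mem_add ha hb, ?_⟩
    rintro _ ⟨a', ha', b', hb', rfl⟩
    rw [map_add, map_add]
    exact add_le_add (hamax a' ha') (hbmax b' hb')

lemma maximizers_sum (f : F) (s : Finset ι) (A : ι → Set E) :
    maximizers f (∑ i ∈ s, A i) = ∑ i ∈ s, maximizers f (A i) := by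
  induction s using Finset.cons_induction with
  | empty => exact maximizers_singleton f 0
  | cons i s hi ih => rw [sum_cons, sum_cons, maximizers_add, ih]

end AddMonoid

section LinearOrderedField
variable {𝕜 E : Type*} [Field 𝕜] [LinearOrder 𝕜] [IsStrictOrderedRing 𝕜] [AddCommGroup E]
  [Module 𝕜 E]

lemma maximizers_smul (f : E →ₗ[𝕜] 𝕜) {A : Set E} (hA : (maximizers f A).Nonempty) {c : 𝕜}
    (hc : 0 ≤ c) : maximizers f (c • A) = c • maximizers f A := by
  rcases hc.eq_or_lt with rfl | hc
  · rw [Set.zero_smul_set hA, Set.zero_smul_set (hA.mono (Set.sep_subset _ _))]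
    exact maximizers_singleton f 0
  · have hf : ⇑f ∘ (c • ·) = (c * ·) ∘ f := funext fun x => by simp
    rw [← Set.image_smul, maximizers_image, hf,
      maximizers_comp_of_strictMono (strictMono_mul_left_of_pos hc), Set.image_smul]

lemma maximizers_convexHull (f : E →ₗ[𝕜] 𝕜) (s : Set E) :
    maximizers f (convexHull 𝕜 s) = convexHull 𝕜 (maximizers f s) := by
  ext y
  constructor
  · rintro ⟨hy, hmax⟩
    obtain ⟨ι, _, w, z, hw₀, hw₁, hz, rfl⟩ := mem_convexHull_iff_exists_fintype.1 hy
    have hzero : ∑ i, w i * (f (∑ j, w j • z j) - f (z i)) = 0 := by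
      simp only [mul_sub, sum_sub_distrib, ← sum_mul, hw₁, one_mul, map_sum, map_smul,
        smul_eq_mul, sub_self]
    have hz_max : ∀ i, w i ≠ 0 → z i ∈ maximizers f s := by
      intro i hi
      have hterm := (sum_eq_zero_iff_of_nonneg fun j _ =>
        mul_nonneg (hw₀ j) (sub_nonneg.2 (hmax _ (subset_convexHull 𝕜 s (hz j))))).1 hzero i
          (mem_univ i)
      have hfz : f (z i) = f (∑ j, w j • z j) := by
        rcases mul_eq_zero.1 hterm with h | h
        · exact absurd h hi
        · exact (sub_eq_zero.1 h).symm
      exact ⟨hz i, fun u hu => hfz ▸ hmax u (subset_convexHull 𝕜 s hu)⟩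
    classical
    rw [← centerMass_eq_of_sum_1 _ _ hw₁, ← centerMass_filter_ne_zero]
    refine centerMass_mem_convexHull _ (fun i _ => hw₀ i) ?_
      fun i hi => hz_max i (mem_filter.1 hi).2
    rw [sum_filter_ne_zero, hw₁]
    exact one_pos
  · intro hy
    obtain ⟨x₀, hx₀⟩ := convexHull_nonempty_iff.1 ⟨y, hy⟩
    have hge : convexHull 𝕜 (maximizers f s) ⊆ {w | f x₀ ≤ f w} :=
      convexHull_min (fun x hx => hx.2 x₀ hx₀.1) (convex_halfSpace_ge f.isLinear _)
    have hle : convexHull 𝕜 s ⊆ {w | f w ≤ f x₀} :=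
      convexHull_min (fun x hx => hx₀.2 x hx) (convex_halfSpace_le f.isLinear _)
    exact ⟨convexHull_mono (Set.sep_subset _ _) hy, fun w hw => (hle hw).trans (hge hy)⟩

end LinearOrderedField

def coordSum {I : Type*} (S : Finset I) : (I → ℝ) →ₗ[ℝ] ℝ :=
  ∑ s ∈ S, LinearMap.proj s

lemma coordSum_apply {I : Type*} (S : Finset I) (x : I → ℝ) : coordSum S x = ∑ s ∈ S, x s := by
  simp [coordSum]

section Simplex
variable {I : Type*} [DecidableEq I] {S J : Finset I}

lemma coordSum_single (j : I) : coordSum S (Pi.single j 1) = if j ∈ S then 1 else 0 := by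
  rw [coordSum_apply, sum_pi_single']

lemma simplexOf_nonempty (hJ : J.Nonempty) : (simplexOf J).Nonempty :=
  ((coe_nonempty.2 hJ).image _).convexHull

lemma maximizers_coordSum_simplexOf_of_inter_nonempty (h : (J ∩ S).Nonempty) :
    maximizers (coordSum S) (simplexOf J) = simplexOf (J ∩ S) := by
  rw [simplexOf, simplexOf, maximizers_convexHull, maximizers_image, coe_inter]
  obtain ⟨k, hk⟩ := h
  obtain ⟨hkJ, hkS⟩ := mem_inter.1 hk
  congr 2
  ext j
  simp only [maximizers, Function.comp, coordSum_single, Set.mem_inter_iff, mem_coe]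
  constructor
  · rintro ⟨hj, hmax⟩
    refine ⟨hj, by_contra fun hjS => ?_⟩
    have := hmax k hkJ
    rw [if_pos hkS, if_neg hjS] at this
    exact absurd this (by norm_num)
  · rintro ⟨hj, hjS⟩
    refine ⟨hj, fun i _ => ?_⟩
    rw [if_pos hjS]
    split_ifs <;> norm_num

lemma maximizers_coordSum_simplexOf_of_disjoint (h : Disjoint J S) :
    maximizers (coordSum S) (simplexOf J) = simplexOf J := by
  rw [simplexOf, maximizers_convexHull, maximizers_of_forall_eq (c := 0)]
  rintro _ ⟨j, hj, rfl⟩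
  rw [coordSum_single, if_neg (disjoint_left.1 h hj)]

variable {c : ℝ}

lemma maximizers_coordSum_smul_simplexOf_of_inter_nonempty (h : (J ∩ S).Nonempty) (hc : 0 ≤ c) :
    maximizers (coordSum S) (c • simplexOf J) = c • simplexOf (J ∩ S) := by
  have hface := maximizers_coordSum_simplexOf_of_inter_nonempty h
  rw [maximizers_smul _ (by rw [hface]; exact simplexOf_nonempty h) hc, hface]

lemma maximizers_coordSum_smul_simplexOf_of_disjoint (hJ : J.Nonempty) (h : Disjoint J S)
    (hc : 0 ≤ c) : maximizers (coordSum S) (c • simplexOf J) = c • simplexOf J := by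
  have hface := maximizers_coordSum_simplexOf_of_disjoint h
  rw [maximizers_smul _ (by rw [hface]; exact simplexOf_nonempty hJ) hc, hface]

end Simplex

/-- For a partition `I = S ⊔ T` and a nonnegative Minkowski sum
`P = ∑_{∅ ≠ J ⊆ I} y(J)•Δ_J`, the face of `P` maximizing `x ↦ ∑_{s ∈ S} x s` equals
`∑_{J : J ∩ S ≠ ∅} y(J)•Δ_{J ∩ S} + ∑_{∅ ≠ J ⊆ T} y(J)•Δ_J`. -/
theorem stmt18 {I : Type*} [Fintype I] [DecidableEq I]
    (S T : Finset I) (hST : Disjoint S T) (hUnion : S ∪ T = Finset.univ)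
    (y : Finset I → ℝ) (hy : ∀ J : Finset I, J.Nonempty → 0 ≤ y J) :
    {x ∈ (∑ J ∈ Finset.univ.filter fun J : Finset I => J.Nonempty, y J • simplexOf J) |
        ∀ w ∈ (∑ J ∈ Finset.univ.filter fun J : Finset I => J.Nonempty, y J • simplexOf J),
          (∑ s ∈ S, w s) ≤ ∑ s ∈ S, x s} =
      (∑ J ∈ Finset.univ.filter fun J : Finset I => (J ∩ S).Nonempty,
          y J • simplexOf (J ∩ S)) +
        ∑ J ∈ Finset.univ.filter fun J : Finset I => J.Nonempty ∧ J ⊆ T,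
          y J • simplexOf J := by
  have hSc : Sᶜ = T := IsCompl.compl_eq ⟨hST, codisjoint_iff.2 hUnion⟩
  have hmeet : ((univ.filter fun J : Finset I => J.Nonempty).filter fun J => (J ∩ S).Nonempty) =
      univ.filter fun J => (J ∩ S).Nonempty := by
    ext J
    simpa using fun h : (J ∩ S).Nonempty => h.mono inter_subset_left
  have hinT : ((univ.filter fun J : Finset I => J.Nonempty).filter fun J => ¬(J ∩ S).Nonempty) =
      univ.filter fun J => J.Nonempty ∧ J ⊆ T := by
    ext J
    simp [← hSc, subset_compl_iff_disjoint_right, disjoint_iff_inter_eq_empty]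
  simp_rw [← coordSum_apply S]
  change maximizers (coordSum S) _ = _
  rw [maximizers_sum, ← sum_filter_add_sum_filter_not _ fun J => (J ∩ S).Nonempty, hmeet, hinT]
  congr 1 <;> refine sum_congr rfl fun J hJ => ?_
  · have hJS := (mem_filter.1 hJ).2
    exact maximizers_coordSum_smul_simplexOf_of_inter_nonempty hJS
      (hy J (hJS.mono inter_subset_left))
  · obtain ⟨hJ, hJT⟩ := (mem_filter.1 hJ).2
    exact maximizers_coordSum_smul_simplexOf_of_disjoint hJ (hST.symm.mono_left hJT) (hy J hJ)
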